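/- arXiv:1701.05164 — 2 statements merged into one kernel-verified Lean document; each statement's English description precedes it below -/
import Mathlib

section
/- Let γ, d, L > 0 and let m, n be natural numbers not both zero. If L² < π²(d+1)(m²+n²)/γ, then for all α, β > 0, the quantity 𝒯(α,β) = γ(β - α - (α+β)³)/(α+β) - (d+1)(n²+m²)π²/L² is strictly negative. -/
theorem trace_neg_of_small_domain (γ d L : ℝ) (hγ : 0 < γ) (hd : 0 < d) (hL : 0 < L)
    (m n : ℕ) (hmn : ¬ (m = 0 ∧ n = 0))
    (hcond : L^2 < Real.pi^2 * (d + 1) * ((m : ℝ)^2 + (n : ℝ)^2) / γ) :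
    ∀ α β : ℝ, 0 < α → 0 < β →
      γ * (β - α - (α + β)^3) / (α + β)
        - (d + 1) * (((n : ℝ)^2 + (m : ℝ)^2) * Real.pi^2) / L^2 < 0 := by
  intro α β hα hβ
  have hs : 0 < α + β := by linarith
  have hmn' : (0:ℝ) < (m : ℝ)^2 + (n : ℝ)^2 := by
    rcases not_and_or.mp hmn with h | h
    · have : (0:ℝ) < (m:ℝ) := by exact_mod_cast Nat.pos_of_ne_zero h
      positivity
    · have : (0:ℝ) < (n:ℝ) := by exact_mod_cast Nat.pos_of_ne_zero h
      positivity
  have hπ : 0 < Real.pi := Real.pi_pos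
  have hL2 : 0 < L^2 := by positivity
  have h1 : γ * (β - α - (α + β)^3) / (α + β) < γ := by
    rw [div_lt_iff₀ hs]
    nlinarith [pow_pos hs 3, mul_pos hγ (pow_pos hs 3)]
  have h2 : γ < (d + 1) * (((n : ℝ)^2 + (m : ℝ)^2) * Real.pi^2) / L^2 := by
    rw [lt_div_iff₀ hL2]
    rw [lt_div_iff₀ hγ] at hcond
    nlinarith
  linarith
end

section
/- Let γ, d, L > 0 and let m, n be natural numbers. If there exist α, β > 0 such that γ(β - α - (α+β)³)/(α+β) - (d+1)(n²+m²)π²/L² ≥ 0, then L² ≥ π²(d+1)(m²+n²)/γ. -/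
theorem hopf_necessary_condition (γ d L : ℝ) (hγ : 0 < γ) (hd : 0 < d) (hL : 0 < L)
    (m n : ℕ)
    (h : ∃ α β : ℝ, 0 < α ∧ 0 < β ∧
      0 ≤ γ * (β - α - (α + β)^3) / (α + β)
        - (d + 1) * (((n : ℝ)^2 + (m : ℝ)^2) * Real.pi^2) / L^2) :
    L^2 ≥ Real.pi^2 * (d + 1) * ((m : ℝ)^2 + (n : ℝ)^2) / γ := by
  obtain ⟨α, β, hα, hβ, hTr⟩ := h
  have hs : 0 < α + β := by linarith
  have hL2 : (0:ℝ) < L^2 := by positivity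
  -- γ * (β - α - (α+β)^3) / (α+β) ≤ γ
  have h1 : γ * (β - α - (α + β)^3) / (α + β) ≤ γ := by
    rw [div_le_iff₀ hs]
    nlinarith [pow_pos hs 3]
  have h2 : (d + 1) * (((n : ℝ)^2 + (m : ℝ)^2) * Real.pi^2) / L^2 ≤ γ := by linarith
  have h3 : (d + 1) * (((n : ℝ)^2 + (m : ℝ)^2) * Real.pi^2) ≤ γ * L^2 := by
    rw [div_le_iff₀ hL2] at h2; linarith
  rw [ge_iff_le, div_le_iff₀ hγ]
  nlinarith
end
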